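/- arXiv:2510.20461 — 2 statements merged into one kernel-verified Lean document; each statement's English description precedes it below -/
import Mathlib

section
/- Let (c_x) be a monotone KCM constraint family of range r on Z^d satisfying the irreducibility assumption, and let μ be a probability measure on Ω satisfying detailed balance. Then for every finite L and every set E ⊆ {0,1}^{Λ_L}: μ({η : η|_{Λ_L} ∈ E}) = Σ_β π({η : η|_{Λ_L} ∈ E} | BP^{Λ_L}(η|_{Λ_L}) = β) · μ({η : BP^{Λ_L}(η|_{Λ_L}) = β}), the sum ranging over all β in the image of BP^{Λ_L}. Equivalently, whenever μ({η : BP^{Λ_L}(η|_{Λ_L}) = β}) > 0, the conditional law of η|_{Λ_L} under μ given BP^{Λ_L}(η|_{Λ_L}) = β equals the conditional law of η|_{Λ_L} under π given the same event. -/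
open MeasureTheory
open scoped Classical ENNReal

/-- Sites of the `d`-dimensional lattice `ℤ^d`. -/
abbrev Site (d : ℕ) : Type := Fin d → ℤ

/-- Configurations on `ℤ^d`: healthy = `true` (state 1), infected = `false` (state 0). -/
abbrev Cfg (d : ℕ) : Type := Site d → Bool

/-- The cylinder event of configurations agreeing with `ζ` on the finite set `Λ`. -/
def cyl (d : ℕ) (Λ : Finset (Site d)) (ζ : Cfg d) : Set (Cfg d) := {η | ∀ x ∈ Λ, η x = ζ x}

/-- A KCM constraint family of range `r`: `c x η` depends only on the states `η y`
for `0 < ‖y - x‖_∞ ≤ r` (in particular not on `η x`). -/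
def HasRange (d : ℕ) (c : Site d → Cfg d → ℝ) (r : ℕ) : Prop :=
  ∀ (x : Site d) (η η' : Cfg d),
    (∀ y : Site d, y ≠ x → (∀ i : Fin d, |y i - x i| ≤ (r : ℤ)) → η y = η' y) →
      c x η = c x η'

/-- The constraint family is monotone: more infections can only increase the rates. -/
def ConstraintMono (d : ℕ) (c : Site d → Cfg d → ℝ) : Prop :=
  ∀ (x : Site d) (η η' : Cfg d), η ≤ η' → c x η' ≤ c x η

/-- Extension of a configuration by healthy (`1`) boundary conditions outside `Λ`. -/
def extCfg (d : ℕ) (Λ : Finset (Site d)) (η : Cfg d) : Cfg d := fun x =>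
  if x ∈ Λ then η x else true

/-- One step of bootstrap percolation restricted to `Λ` (with healthy boundary conditions):
a site of `Λ` becomes infected if it is infected or its constraint is strictly positive. -/
noncomputable def bstepFin (d : ℕ) (c : Site d → Cfg d → ℝ) (Λ : Finset (Site d))
    (η : Cfg d) : Cfg d := fun x =>
  if x ∈ Λ then (η x && !decide (0 < c x η)) else η x

/-- `BP^Λ(η)`: the limit of bootstrap percolation restricted to `Λ`, applied to `η` extended
by `1` outside `Λ` (since each non-trivial step infects at least one new site of `Λ`,
`Λ.card` iterations reach the monotone limit). -/
noncomputable def BPfin (d : ℕ) (c : Site d → Cfg d → ℝ) (Λ : Finset (Site d))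
    (η : Cfg d) : Cfg d :=
  (bstepFin d c Λ)^[Λ.card] (extCfg d Λ η)

/-- One step of bootstrap percolation on the whole lattice. -/
noncomputable def bstep (d : ℕ) (c : Site d → Cfg d → ℝ) (η : Cfg d) : Cfg d := fun x =>
  η x && !decide (0 < c x η)

/-- `BP(η)`: the pointwise monotone limit of the bootstrap percolation iterates. -/
noncomputable def BP (d : ℕ) (c : Site d → Cfg d → ℝ) (η : Cfg d) : Cfg d := fun x =>
  decide (∀ n : ℕ, (bstep d c)^[n] η x = true)

/-- The configuration `η` flipped at `x`. -/
def flipAt (d : ℕ) (η : Cfg d) (x : Site d) : Cfg d := Function.update η x (!(η x))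

/-- A legal flip inside `Λ`: a flip at a site `x ∈ Λ` whose constraint (evaluated on the
current configuration, which is extended by `1` outside `Λ`) is strictly positive. -/
def LegalStep (d : ℕ) (c : Site d → Cfg d → ℝ) (Λ : Finset (Site d)) (η η' : Cfg d) : Prop :=
  ∃ x ∈ Λ, 0 < c x η ∧ η' = flipAt d η x

/-- Irreducibility assumption: within every finite volume `Λ` (with healthy boundary
conditions), any two configurations with the same restricted bootstrap limit are connected
by a chain of legal flips. -/
def IrreducibleKCM (d : ℕ) (c : Site d → Cfg d → ℝ) : Prop :=
  ∀ (Λ : Finset (Site d)) (ζ ζ' : Cfg d), BPfin d c Λ ζ = BPfin d c Λ ζ' →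
    Relation.ReflTransGen (LegalStep d c Λ) (extCfg d Λ ζ) (extCfg d Λ ζ')

/-- Detailed balance for `μ`: for every finite `Λ`, every `x` with `x + [-r,r]^d ⊆ Λ`, and
every `ζ ∈ {0,1}^Λ`, `c_x(ζ) π_Λ(ζ^x) μ(η|_Λ = ζ) = c_x(ζ) π_Λ(ζ) μ(η|_Λ = ζ^x)`. -/
def DetailedBalance (d : ℕ) (c : Site d → Cfg d → ℝ) (p : ℝ) (r : ℕ)
    (μ : Measure (Cfg d)) : Prop :=
  ∀ (Λ : Finset (Site d)) (x : Site d),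
    (∀ y : Site d, (∀ i : Fin d, |y i - x i| ≤ (r : ℤ)) → y ∈ Λ) →
    ∀ ζ : Cfg d,
      c x ζ * (∏ y ∈ Λ, if flipAt d ζ x y then p else 1 - p) * (μ (cyl d Λ ζ)).toReal
        = c x ζ * (∏ y ∈ Λ, if ζ y then p else 1 - p) *
            (μ (cyl d Λ (flipAt d ζ x))).toReal

/-- `ν` is the product measure on `{0,1}^{ℤ^d}` with marginals `ν(η_x = 1) = m x`. -/
def IsProd (d : ℕ) (m : Site d → ℝ) (ν : Measure (Cfg d)) : Prop :=
  IsProbabilityMeasure ν ∧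
    ∀ (Λ : Finset (Site d)) (ζ : Cfg d),
      ν (cyl d Λ ζ) = ∏ x ∈ Λ, ENNReal.ofReal (if ζ x then m x else 1 - m x)

/-- The box `Λ_N = [-N,N]^d ∩ ℤ^d`. -/
noncomputable def box (d : ℕ) (N : ℕ) : Finset (Site d) :=
  Fintype.piFinset fun _ : Fin d => Finset.Icc (-(N : ℤ)) (N : ℤ)

/-!
Detailed balance at a site `x` whose constraint is positive says that the density
`μ(cyl Λ' η) / π(cyl Λ' η)` of `μ` with respect to `π` is unchanged by flipping `η` at `x`,
as soon as `Λ'` contains the range-`r` neighbourhood of `x`. By monotonicity of the constraints, a legal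
flip in `Λ` for the configuration with healthy boundary stays legal whatever lies outside `Λ`,
so for every exterior pattern on `Λ_{L+r} \ Λ_L` the density on the `Λ_{L+r}`-cylinders is
invariant along legal chains in `Λ_L`. Averaging over the exterior pattern, the density on
`Λ_L`-cylinders is constant along legal chains, hence, by irreducibility, on each level set
of `BP^{Λ_L}`. So on each such level set `μ` is a multiple of `π`, which is the claim.
-/

open ProbabilityTheory

namespace ProbabilityTheory

lemma cond_apply_mul_eq_of_measureReal_eq_mul {Ω : Type*} [MeasurableSpace Ω]
    {π μ : Measure Ω} [IsFiniteMeasure π] [IsFiniteMeasure μ] {D E : Set Ω}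
    (hD : MeasurableSet D) (hπD : π D ≠ 0) {k : ℝ} (hμD : μ.real D = k * π.real D)
    (hμDE : μ.real (D ∩ E) = k * π.real (D ∩ E)) :
    π[E | D] * μ D = μ (D ∩ E) := by
  rw [cond_apply hD]
  refine (ENNReal.toReal_eq_toReal_iff' (by finiteness) (by finiteness)).1 ?_
  have hπD' : π.real D ≠ 0 := (measureReal_ne_zero_iff).2 hπD
  simp only [ENNReal.toReal_mul, ENNReal.toReal_inv, ← measureReal_def, hμD, hμDE]
  field_simp

end ProbabilityTheory

namespace KCM

variable {d : ℕ}

section Patterns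

def ofPattern (Λ : Finset (Site d)) (f : Λ → Bool) : Cfg d := fun y =>
  if h : y ∈ Λ then f ⟨y, h⟩ else true

lemma ofPattern_of_mem {Λ : Finset (Site d)} (f : Λ → Bool) {y : Site d} (hy : y ∈ Λ) :
    ofPattern Λ f y = f ⟨y, hy⟩ :=
  dif_pos hy

lemma mem_cyl_ofPattern_restrict (Λ : Finset (Site d)) (η : Cfg d) :
    η ∈ cyl d Λ (ofPattern Λ (Λ.restrict η)) := fun _ hx =>
  (ofPattern_of_mem (Λ.restrict η) hx).symm

lemma disjoint_cyl_ofPattern {Λ : Finset (Site d)} {f g : Λ → Bool} (hfg : f ≠ g) :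
    Disjoint (cyl d Λ (ofPattern Λ f)) (cyl d Λ (ofPattern Λ g)) := by
  refine Set.disjoint_left.2 fun η hf hg => hfg (funext fun x => ?_)
  have hfx := hf x x.2
  have hgx := hg x x.2
  rw [ofPattern_of_mem f x.2] at hfx
  rw [ofPattern_of_mem g x.2] at hgx
  exact hfx.symm.trans hgx

lemma measurableSet_cyl (Λ : Finset (Site d)) (ζ : Cfg d) : MeasurableSet (cyl d Λ ζ) := by
  have h : cyl d Λ ζ = ⋂ x ∈ (Λ : Set (Site d)), (fun η : Cfg d => η x) ⁻¹' {ζ x} := by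
    ext η
    simp [cyl]
  rw [h]
  exact .biInter Λ.countable_toSet fun x _ => measurable_pi_apply x (measurableSet_singleton _)

lemma biUnion_inter_cyl_ofPattern (Λ : Finset (Site d)) (A : Set (Cfg d)) :
    ⋃ f ∈ (Finset.univ : Finset (Λ → Bool)), A ∩ cyl d Λ (ofPattern Λ f) = A := by
  ext η
  simp only [Set.mem_iUnion, Finset.mem_univ, Set.mem_inter_iff, exists_const]
  exact ⟨fun ⟨_, hη, _⟩ => hη, fun hη => ⟨_, hη, mem_cyl_ofPattern_restrict Λ η⟩⟩

lemma measureReal_eq_sum_inter_cyl (μ : Measure (Cfg d)) [IsFiniteMeasure μ]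
    (Λ : Finset (Site d)) {A : Set (Cfg d)} (hA : MeasurableSet A) :
    μ.real A = ∑ f : Λ → Bool, μ.real (A ∩ cyl d Λ (ofPattern Λ f)) := by
  conv_lhs => rw [← biUnion_inter_cyl_ofPattern Λ A]
  refine measureReal_biUnion_finset ?_ fun f _ => hA.inter (measurableSet_cyl _ _)
  exact fun f _ g _ hfg =>
    (disjoint_cyl_ofPattern hfg).mono Set.inter_subset_right Set.inter_subset_right

def IsLocal (Λ : Finset (Site d)) (A : Set (Cfg d)) : Prop :=
  ∀ η η' : Cfg d, (∀ x ∈ Λ, η x = η' x) → (η ∈ A ↔ η' ∈ A)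

lemma IsLocal.inter {Λ : Finset (Site d)} {A B : Set (Cfg d)} (hA : IsLocal Λ A)
    (hB : IsLocal Λ B) : IsLocal Λ (A ∩ B) := fun η η' h =>
  and_congr (hA η η' h) (hB η η' h)

lemma IsLocal.inter_cyl_ofPattern {Λ : Finset (Site d)} {A : Set (Cfg d)} (hA : IsLocal Λ A)
    (f : Λ → Bool) :
    A ∩ cyl d Λ (ofPattern Λ f) =
      if ofPattern Λ f ∈ A then cyl d Λ (ofPattern Λ f) else ∅ := by
  ext η
  split_ifs with hf
  · exact ⟨fun h => h.2, fun h => ⟨(hA η _ h).2 hf, h⟩⟩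
  · exact ⟨fun h => hf ((hA η _ h.2).1 h.1), False.elim⟩

lemma IsLocal.measurableSet {Λ : Finset (Site d)} {A : Set (Cfg d)} (hA : IsLocal Λ A) :
    MeasurableSet A := by
  rw [← biUnion_inter_cyl_ofPattern Λ A]
  refine Finset.measurableSet_biUnion _ fun f _ => ?_
  rw [hA.inter_cyl_ofPattern]
  split_ifs
  exacts [measurableSet_cyl _ _, .empty]

lemma IsLocal.measureReal_eq_sum {Λ : Finset (Site d)} {A : Set (Cfg d)} (hA : IsLocal Λ A)
    (μ : Measure (Cfg d)) [IsFiniteMeasure μ] :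
    μ.real A = ∑ f ∈ Finset.univ.filter (fun f : Λ → Bool => ofPattern Λ f ∈ A),
      μ.real (cyl d Λ (ofPattern Λ f)) := by
  rw [measureReal_eq_sum_inter_cyl μ Λ hA.measurableSet, Finset.sum_filter]
  refine Finset.sum_congr rfl fun f _ => ?_
  rw [hA.inter_cyl_ofPattern]
  split_ifs <;> simp

lemma IsLocal.measureReal_eq_mul {Λ : Finset (Site d)} {A : Set (Cfg d)} (hA : IsLocal Λ A)
    {μ ν : Measure (Cfg d)} [IsFiniteMeasure μ] [IsFiniteMeasure ν] {k : ℝ}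
    (h : ∀ f : Λ → Bool, ofPattern Λ f ∈ A →
      μ.real (cyl d Λ (ofPattern Λ f)) = k * ν.real (cyl d Λ (ofPattern Λ f))) :
    μ.real A = k * ν.real A := by
  rw [hA.measureReal_eq_sum, hA.measureReal_eq_sum, Finset.mul_sum]
  exact Finset.sum_congr rfl fun f hf => h f (Finset.mem_filter.1 hf).2

end Patterns

section Density

variable (p : ℝ)

def cylWeight (Λ : Finset (Site d)) (η : Cfg d) : ℝ :=
  ∏ y ∈ Λ, if η y then p else 1 - p

variable {p}

lemma cylWeight_pos (hp0 : 0 < p) (hp1 : p < 1) (Λ : Finset (Site d)) (η : Cfg d) :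
    0 < cylWeight p Λ η :=
  Finset.prod_pos fun y _ => by split <;> linarith

lemma measureReal_cyl_of_isProd {π : Measure (Cfg d)} (hπ : IsProd d (fun _ => p) π)
    (hp0 : 0 ≤ p) (hp1 : p ≤ 1) (Λ : Finset (Site d)) (ζ : Cfg d) :
    π.real (cyl d Λ ζ) = cylWeight p Λ ζ := by
  rw [measureReal_def, hπ.2, ENNReal.toReal_prod]
  exact Finset.prod_congr rfl fun y _ => ENNReal.toReal_ofReal (by split <;> linarith)

def glue (Λ : Finset (Site d)) (ξ η : Cfg d) : Cfg d := fun y =>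
  if y ∈ Λ then η y else ξ y

lemma glue_extCfg (Λ : Finset (Site d)) (ξ ζ : Cfg d) :
    glue Λ ξ (extCfg d Λ ζ) = glue Λ ξ ζ := by
  funext y
  by_cases hy : y ∈ Λ <;> simp [glue, extCfg, hy]

lemma glue_flipAt {Λ : Finset (Site d)} {x : Site d} (hx : x ∈ Λ) (ξ η : Cfg d) :
    glue Λ ξ (flipAt d η x) = flipAt d (glue Λ ξ η) x := by
  funext y
  by_cases hyx : y = x
  · subst hyx
    simp [glue, flipAt, hx]
  · simp [glue, flipAt, Function.update_of_ne hyx]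

lemma glue_le {Λ : Finset (Site d)} {η : Cfg d} (hη : ∀ y ∉ Λ, η y = true) (ξ : Cfg d) :
    glue Λ ξ η ≤ η := by
  intro y
  by_cases hy : y ∈ Λ
  · simp [glue, hy]
  · simp [hη y hy]

lemma cyl_inter_cyl_sdiff {Λ Λ' : Finset (Site d)} (h : Λ ⊆ Λ') (ξ ζ : Cfg d) :
    cyl d Λ ζ ∩ cyl d (Λ' \ Λ) ξ = cyl d Λ' (glue Λ ξ ζ) := by
  ext η
  simp only [cyl, glue, Set.mem_inter_iff, Finset.mem_sdiff]
  constructor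
  · rintro ⟨hζ, hξ⟩ y hy
    split_ifs with hyΛ
    exacts [hζ y hyΛ, hξ y ⟨hy, hyΛ⟩]
  · intro hη
    refine ⟨fun y hy => ?_, fun y hy => ?_⟩
    · simpa [hy] using hη y (h hy)
    · simpa [hy.2] using hη y hy.1

lemma cylWeight_glue {Λ Λ' : Finset (Site d)} (h : Λ ⊆ Λ') (ξ ζ : Cfg d) :
    cylWeight p Λ' (glue Λ ξ ζ) = cylWeight p (Λ' \ Λ) ξ * cylWeight p Λ ζ := by
  unfold cylWeight
  rw [← Finset.prod_sdiff h]
  congr 1 <;> refine Finset.prod_congr rfl fun y hy => ?_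
  · simp [glue, (Finset.mem_sdiff.1 hy).2]
  · simp [glue, hy]

variable (p) in
noncomputable def cylRatio (μ : Measure (Cfg d)) (Λ : Finset (Site d)) (η : Cfg d) : ℝ :=
  μ.real (cyl d Λ η) / cylWeight p Λ η

lemma cylRatio_eq_sum {μ : Measure (Cfg d)} [IsFiniteMeasure μ] (hp0 : 0 < p) (hp1 : p < 1)
    {Λ Λ' : Finset (Site d)} (h : Λ ⊆ Λ') (ζ : Cfg d) :
    cylRatio p μ Λ ζ = ∑ G : ↥(Λ' \ Λ) → Bool, cylWeight p (Λ' \ Λ) (ofPattern _ G) *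
      cylRatio p μ Λ' (glue Λ (ofPattern _ G) ζ) := by
  rw [cylRatio, measureReal_eq_sum_inter_cyl μ (Λ' \ Λ) (measurableSet_cyl Λ ζ),
    Finset.sum_div]
  refine Finset.sum_congr rfl fun G _ => ?_
  rw [cyl_inter_cyl_sdiff h, cylRatio, cylWeight_glue h]
  field_simp [(cylWeight_pos hp0 hp1 Λ ζ).ne',
    (cylWeight_pos hp0 hp1 (Λ' \ Λ) (ofPattern _ G)).ne']

end Density

section Dynamics

variable {c : Site d → Cfg d → ℝ} {p : ℝ} {r : ℕ} {μ : Measure (Cfg d)}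

lemma cylRatio_flipAt (hdb : DetailedBalance d c p r μ) (hp0 : 0 < p) (hp1 : p < 1)
    {Λ' : Finset (Site d)} {x : Site d}
    (hx : ∀ y : Site d, (∀ i : Fin d, |y i - x i| ≤ (r : ℤ)) → y ∈ Λ')
    {η : Cfg d} (hc : 0 < c x η) :
    cylRatio p μ Λ' (flipAt d η x) = cylRatio p μ Λ' η := by
  have h := hdb Λ' x hx η
  rw [mul_assoc, mul_assoc] at h
  have hbal := mul_left_cancel₀ hc.ne' h
  rw [cylRatio, cylRatio, div_eq_div_iff (cylWeight_pos hp0 hp1 _ _).ne'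
    (cylWeight_pos hp0 hp1 _ _).ne']
  unfold cylWeight
  rw [measureReal_def, measureReal_def]
  linear_combination -hbal

lemma LegalStep.apply_eq_of_notMem {Λ : Finset (Site d)} {η η' : Cfg d}
    (h : LegalStep d c Λ η η') {y : Site d} (hy : y ∉ Λ) : η' y = η y := by
  obtain ⟨x, hx, -, rfl⟩ := h
  exact Function.update_of_ne (fun hyx : y = x => hy (hyx ▸ hx)) _ _

lemma reflTransGen_legalStep_apply_eq_of_notMem {Λ : Finset (Site d)} {η η' : Cfg d}
    (h : Relation.ReflTransGen (LegalStep d c Λ) η η') {y : Site d} (hy : y ∉ Λ) :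
    η' y = η y := by
  induction h with
  | refl => rfl
  | tail _ hstep ih => rw [LegalStep.apply_eq_of_notMem hstep hy, ih]

lemma cylRatio_glue_eq_of_reflTransGen (hmono : ConstraintMono d c)
    (hdb : DetailedBalance d c p r μ) (hp0 : 0 < p) (hp1 : p < 1) {Λ Λ' : Finset (Site d)}
    (hnb : ∀ x ∈ Λ, ∀ y : Site d, (∀ i : Fin d, |y i - x i| ≤ (r : ℤ)) → y ∈ Λ')
    {η η' : Cfg d} (h : Relation.ReflTransGen (LegalStep d c Λ) η η')
    (hη : ∀ y ∉ Λ, η y = true) (ξ : Cfg d) :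
    cylRatio p μ Λ' (glue Λ ξ η') = cylRatio p μ Λ' (glue Λ ξ η) := by
  induction h with
  | refl => rfl
  | @tail b _ hchain hstep ih =>
    obtain ⟨x, hxΛ, hc, rfl⟩ := hstep
    have hb : ∀ y ∉ Λ, b y = true := fun y hy =>
      (reflTransGen_legalStep_apply_eq_of_notMem hchain hy).trans (hη y hy)
    have hc' : 0 < c x (glue Λ ξ b) := hc.trans_le (hmono x _ _ (glue_le hb ξ))
    rw [glue_flipAt hxΛ, cylRatio_flipAt hdb hp0 hp1 (hnb x hxΛ) hc', ih]

lemma cylRatio_eq_of_BPfin_eq [IsFiniteMeasure μ] (hmono : ConstraintMono d c)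
    (hirr : IrreducibleKCM d c) (hdb : DetailedBalance d c p r μ) (hp0 : 0 < p) (hp1 : p < 1)
    {Λ Λ' : Finset (Site d)}
    (hnb : ∀ x ∈ Λ, ∀ y : Site d, (∀ i : Fin d, |y i - x i| ≤ (r : ℤ)) → y ∈ Λ')
    {ζ ζ' : Cfg d} (hBP : BPfin d c Λ ζ = BPfin d c Λ ζ') :
    cylRatio p μ Λ ζ' = cylRatio p μ Λ ζ := by
  have hΛ : Λ ⊆ Λ' := fun x hx => hnb x hx x (by simp)
  rw [cylRatio_eq_sum hp0 hp1 hΛ, cylRatio_eq_sum hp0 hp1 hΛ]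
  refine Finset.sum_congr rfl fun G _ => ?_
  have h := cylRatio_glue_eq_of_reflTransGen hmono hdb hp0 hp1 hnb (hirr Λ ζ ζ' hBP)
    (fun y hy => if_neg hy) (ofPattern _ G)
  rw [glue_extCfg, glue_extCfg] at h
  rw [h]

end Dynamics

section Conditioning

variable {c : Site d → Cfg d → ℝ}

lemma mem_box_add_of_mem {L r : ℕ} {x y : Site d} (hx : x ∈ box d L)
    (hy : ∀ i : Fin d, |y i - x i| ≤ (r : ℤ)) : y ∈ box d (L + r) := by
  simp only [box, Fintype.mem_piFinset, Finset.mem_Icc] at hx ⊢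
  intro i
  have := abs_le.1 (hy i)
  push_cast
  constructor <;> linarith [hx i]

lemma BPfin_congr {Λ : Finset (Site d)} {η η' : Cfg d} (h : ∀ x ∈ Λ, η x = η' x) :
    BPfin d c Λ η = BPfin d c Λ η' := by
  unfold BPfin
  congr 1
  funext y
  unfold extCfg
  split_ifs with hy
  exacts [h y hy, rfl]

lemma isLocal_setOf_BPfin_eq (c : Site d → Cfg d → ℝ) (Λ : Finset (Site d)) (β : Cfg d) :
    IsLocal Λ {η | BPfin d c Λ η = β} := fun η η' h => by
  change BPfin d c Λ η = β ↔ BPfin d c Λ η' = β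
  rw [BPfin_congr h]

lemma BPfin_mem_image_ofPattern (Λ : Finset (Site d)) (η : Cfg d) :
    BPfin d c Λ η ∈ Finset.univ.image fun f : Λ → Bool => BPfin d c Λ (ofPattern Λ f) :=
  Finset.mem_image.2
    ⟨Λ.restrict η, Finset.mem_univ _, (BPfin_congr (mem_cyl_ofPattern_restrict Λ η)).symm⟩

lemma measure_eq_tsum_setOf_BPfin_eq_inter (μ : Measure (Cfg d)) (Λ : Finset (Site d))
    (E : Set (Cfg d)) : μ E = ∑' β, μ ({η | BPfin d c Λ η = β} ∩ E) := by
  set T := Finset.univ.image fun f : Λ → Bool => BPfin d c Λ (ofPattern Λ f)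
  have hT : BPfin d c Λ ⁻¹' T = Set.univ :=
    Set.eq_univ_of_forall fun η => BPfin_mem_image_ofPattern Λ η
  rw [tsum_eq_sum (s := T) fun β hβ => ?_]
  · have h := sum_measure_preimage_singleton (μ := μ.restrict E) T
      fun β _ => (isLocal_setOf_BPfin_eq c Λ β).measurableSet
    rw [hT, Measure.restrict_apply_univ] at h
    rw [← h]
    exact Finset.sum_congr rfl fun β _ =>
      Measure.restrict_apply (isLocal_setOf_BPfin_eq c Λ β).measurableSet
  · convert measure_empty (μ := μ)
    refine Set.eq_empty_of_forall_notMem fun η hη => hβ ?_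
    exact hη.1 ▸ BPfin_mem_image_ofPattern Λ η

variable {p : ℝ} {r : ℕ} {μ π : Measure (Cfg d)} {Λ Λ' : Finset (Site d)}

lemma measureReal_eq_cylRatio_mul [IsFiniteMeasure μ] (hmono : ConstraintMono d c)
    (hirr : IrreducibleKCM d c) (hdb : DetailedBalance d c p r μ) (hp0 : 0 < p) (hp1 : p < 1)
    (hπ : IsProd d (fun _ => p) π)
    (hnb : ∀ x ∈ Λ, ∀ y : Site d, (∀ i : Fin d, |y i - x i| ≤ (r : ℤ)) → y ∈ Λ')
    {β η₀ : Cfg d} (hη₀ : BPfin d c Λ η₀ = β) {A : Set (Cfg d)} (hA : IsLocal Λ A)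
    (hAβ : A ⊆ {η | BPfin d c Λ η = β}) :
    μ.real A = cylRatio p μ Λ η₀ * π.real A := by
  have := hπ.1
  refine hA.measureReal_eq_mul fun f hf => ?_
  rw [measureReal_cyl_of_isProd hπ hp0.le hp1.le,
    cylRatio_eq_of_BPfin_eq hmono hirr hdb hp0 hp1 hnb ((hAβ hf).trans hη₀.symm), cylRatio,
    div_mul_cancel₀ _ (cylWeight_pos hp0 hp1 _ _).ne']

lemma cond_mul_measure_setOf_BPfin_eq [IsFiniteMeasure μ] (hmono : ConstraintMono d c)
    (hirr : IrreducibleKCM d c) (hdb : DetailedBalance d c p r μ) (hp0 : 0 < p) (hp1 : p < 1)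
    (hπ : IsProd d (fun _ => p) π)
    (hnb : ∀ x ∈ Λ, ∀ y : Site d, (∀ i : Fin d, |y i - x i| ≤ (r : ℤ)) → y ∈ Λ')
    {E : Set (Cfg d)} (hE : IsLocal Λ E) (β : Cfg d) :
    π[E | {η | BPfin d c Λ η = β}] * μ {η | BPfin d c Λ η = β}
      = μ ({η | BPfin d c Λ η = β} ∩ E) := by
  have := hπ.1
  rcases Set.eq_empty_or_nonempty {η | BPfin d c Λ η = β} with hempty | ⟨η₀, hη₀⟩
  · simp [hempty]
  have hD := isLocal_setOf_BPfin_eq c Λ β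
  have hπD : π {η | BPfin d c Λ η = β} ≠ 0 := fun h0 => by
    have hcyl : cyl d Λ η₀ ⊆ {η | BPfin d c Λ η = β} := fun η hη =>
      (BPfin_congr hη).trans hη₀
    have := measureReal_cyl_of_isProd hπ hp0.le hp1.le Λ η₀
    rw [measureReal_def, measure_mono_null hcyl h0, ENNReal.toReal_zero] at this
    exact (cylWeight_pos hp0 hp1 Λ η₀).ne this
  exact cond_apply_mul_eq_of_measureReal_eq_mul hD.measurableSet hπD
    (measureReal_eq_cylRatio_mul hmono hirr hdb hp0 hp1 hπ hnb hη₀ hD subset_rfl)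
    (measureReal_eq_cylRatio_mul hmono hirr hdb hp0 hp1 hπ hnb hη₀ (hD.inter hE)
      Set.inter_subset_left)

end Conditioning

end KCM

open KCM in
theorem stmt9_general (d : ℕ) (q p : ℝ) (hq0 : 0 < q) (hq1 : q < 1) (hp : p = 1 - q)
    (r : ℕ) (c : Site d → Cfg d → ℝ)
    (hmono : ConstraintMono d c) (hirr : IrreducibleKCM d c)
    (π : Measure (Cfg d)) (hπ : IsProd d (fun _ => p) π)
    (μ : Measure (Cfg d)) (hμ : IsProbabilityMeasure μ)
    (hdb : DetailedBalance d c p r μ) :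
    ∀ (L : ℕ) (E : Set (Cfg d)), MeasurableSet E →
      (∀ η η' : Cfg d, (∀ x ∈ box d L, η x = η' x) → (η ∈ E ↔ η' ∈ E)) →
      μ E = ∑' β : Cfg d,
        (ProbabilityTheory.cond π {η | BPfin d c (box d L) η = β}) E *
          μ {η | BPfin d c (box d L) η = β} := by
  intro L E _ hE
  have hp0 : 0 < p := by linarith
  have hp1 : p < 1 := by linarith
  rw [measure_eq_tsum_setOf_BPfin_eq_inter μ (box d L) E]
  exact tsum_congr fun β => (cond_mul_measure_setOf_BPfin_eq hmono hirr hdb hp0 hp1 hπ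
    (fun _ hx _ => mem_box_add_of_mem hx) hE β).symm

/-- let `(c_x)` be a monotone KCM constraint family of range `r` on `ℤ^d`
satisfying the irreducibility assumption, and let `μ` satisfy detailed balance. Then, for
every box `Λ_L` and every (measurable) event `E` depending only on the coordinates in
`Λ_L`, `μ(E) = ∑_β π(E | BP^{Λ_L}(η|_{Λ_L}) = β) μ(BP^{Λ_L}(η|_{Λ_L}) = β)`
(terms with `β` outside the range of `BP^{Λ_L}` vanish); equivalently, conditionally on
each ergodic component, `μ` coincides with the Bernoulli(`p`) product measure `π`. -/
theorem stmt9 (d : ℕ) (q p : ℝ) (hq0 : 0 < q) (hq1 : q < 1) (hp : p = 1 - q)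
    (r : ℕ) (c : Site d → Cfg d → ℝ) (hrange : HasRange d c r)
    (hc0 : ∀ x η, 0 ≤ c x η) (hmono : ConstraintMono d c) (hirr : IrreducibleKCM d c)
    (π : Measure (Cfg d)) (hπ : IsProd d (fun _ => p) π)
    (μ : Measure (Cfg d)) (hμ : IsProbabilityMeasure μ)
    (hdb : DetailedBalance d c p r μ) :
    ∀ (L : ℕ) (E : Set (Cfg d)), MeasurableSet E →
      (∀ η η' : Cfg d, (∀ x ∈ box d L, η x = η' x) → (η ∈ E ↔ η' ∈ E)) →
      μ E = ∑' β : Cfg d,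
        (ProbabilityTheory.cond π {η | BPfin d c (box d L) η = β}) E *
          μ {η | BPfin d c (box d L) η = β} :=
  stmt9_general d q p hq0 hq1 hp r c hmono hirr π hπ μ hμ hdb
end

section
/- Let (c_x) be a monotone KCM constraint family of range r on Z^d. Fix integers L > N and a configuration β ∈ {0,1}^{Λ_L} in the image of BP^{Λ_L} such that β is identically 0 on Λ_N. Then π( BP^{Λ_N}(η|_{Λ_N}) = 0_{Λ_N} | BP^{Λ_L}(η|_{Λ_L}) = β ) ≥ π( BP^{Λ_N}(η|_{Λ_N}) = 0_{Λ_N} ). In particular, if π(BP^{Λ_N}(η|_{Λ_N}) = 0_{Λ_N}) → 1 as N → ∞, the left-hand side is at least 1 − o_N(1) uniformly in L and β. -/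
/-!
Write `A` for the event that `Λ_N` is internally emptiable and `B` for `{BP^{Λ_L} = β}`.
Both are decreasing in the configuration inside `Λ_N` once the configuration outside `Λ_N` is
fixed: for `A` this is monotonicity of bootstrap percolation; for `B`, infecting sites of `Λ_N`
can only lower `BP^{Λ_L}`, yet it stays above `β`, because `β` vanishes on `Λ_N` and is a fixed
point of `BP^{Λ_L}`. Since `A` depends only on `Λ_N`, the Harris inequality on each slice
`{η = ξ off Λ_N}`, summed over `ξ`, gives `π(A) π(B) ≤ π(A ∩ B)`, and `π(B) > 0` because `β`
is attained.
-/

open MeasureTheory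
open scoped Classical ENNReal

theorem Function.isFixedPt_iterate_of_potential {α : Type*} {g : α → α} {m : α → ℕ}
    (hm : ∀ a, g a ≠ a → m (g a) < m a) (n : ℕ) (a : α) (ha : m a ≤ n) :
    Function.IsFixedPt g (g^[n] a) := by
  induction n generalizing a with
  | zero =>
    by_contra hne
    exact absurd (hm a hne) (by omega)
  | succ n ih =>
    by_cases hfix : g a = a
    · exact (Function.IsFixedPt.iterate hfix (n + 1)).symm ▸ hfix
    · exact ih (g a) (by have := hm a hfix; omega)

section Bootstrap

open Finset

variable {d : ℕ} {c : Site d → Cfg d → ℝ} {Λ : Finset (Site d)}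

lemma bstepFin_le (η : Cfg d) : bstepFin d c Λ η ≤ η := by
  intro x
  unfold bstepFin
  split
  · exact Bool.and_le_left _ _
  · exact le_rfl

lemma bstepFin_of_notMem (η : Cfg d) {x : Site d} (hx : x ∉ Λ) :
    bstepFin d c Λ η x = η x := if_neg hx

lemma bstepFin_mono (hmono : ConstraintMono d c) : Monotone (bstepFin d c Λ) := by
  intro η η' h x
  unfold bstepFin
  split
  · rw [Bool.le_iff_imp]
    simp only [Bool.and_eq_true, Bool.not_eq_true', decide_eq_false_iff_not]
    exact fun ⟨hx, hc⟩ => ⟨Bool.le_iff_imp.mp (h x) hx,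
      fun hc' => hc (hc'.trans_le (hmono x η η' h))⟩
  · exact h x

lemma card_healthy_bstepFin_lt {η : Cfg d} (hne : bstepFin d c Λ η ≠ η) :
    #{x ∈ Λ | bstepFin d c Λ η x = true} < #{x ∈ Λ | η x = true} := by
  obtain ⟨x, hx⟩ := Function.ne_iff.mp hne
  have hxΛ : x ∈ Λ := by
    by_contra h
    exact hx (bstepFin_of_notMem η h)
  have hflip : bstepFin d c Λ η x = false ∧ η x = true := by
    have := bstepFin_le (c := c) (Λ := Λ) η x
    revert hx this
    cases bstepFin d c Λ η x <;> cases η x <;> simp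
  refine card_lt_card ((ssubset_iff_of_subset ?_).mpr ⟨x, ?_, ?_⟩)
  · exact monotone_filter_right Λ fun y _ hy => Bool.le_iff_imp.mp (bstepFin_le η y) hy
  · simp [hxΛ, hflip.2]
  · simp [hflip.1]

lemma BPfin_isFixedPt (η : Cfg d) : Function.IsFixedPt (bstepFin d c Λ) (BPfin d c Λ η) :=
  Function.isFixedPt_iterate_of_potential (m := fun η => #{x ∈ Λ | η x = true})
    (fun _ => card_healthy_bstepFin_lt) _ _ (card_filter_le _ _)

lemma iterate_bstepFin_of_notMem (n : ℕ) (η : Cfg d) {x : Site d} (hx : x ∉ Λ) :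
    (bstepFin d c Λ)^[n] η x = η x := by
  induction n with
  | zero => rfl
  | succ n ih => rw [Function.iterate_succ_apply', bstepFin_of_notMem _ hx, ih]

lemma extCfg_BPfin (η : Cfg d) : extCfg d Λ (BPfin d c Λ η) = BPfin d c Λ η := by
  funext x
  by_cases hx : x ∈ Λ
  · simp [extCfg, hx]
  · simp [extCfg, BPfin, hx, iterate_bstepFin_of_notMem _ _ hx]

lemma BPfin_BPfin (η : Cfg d) : BPfin d c Λ (BPfin d c Λ η) = BPfin d c Λ η := by
  rw [BPfin, extCfg_BPfin]
  exact (BPfin_isFixedPt η).iterate _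

lemma BPfin_le_extCfg (η : Cfg d) : BPfin d c Λ η ≤ extCfg d Λ η :=
  Function.iterate_le_id_of_le_id bstepFin_le _ _

lemma BPfin_le_BPfin (hmono : ConstraintMono d c) {η η' : Cfg d}
    (h : ∀ x ∈ Λ, η x ≤ η' x) : BPfin d c Λ η ≤ BPfin d c Λ η' := by
  refine (bstepFin_mono hmono).iterate _ fun x => ?_
  by_cases hx : x ∈ Λ
  · simpa [extCfg, hx] using h x hx
  · simp [extCfg, hx]

lemma BPfin_dependsOn : DependsOn (BPfin d c Λ) Λ := by
  intro η η' h
  unfold BPfin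
  congr 1
  funext x
  by_cases hx : x ∈ Λ
  · simp [extCfg, hx, h x hx]
  · simp [extCfg, hx]

lemma BPfin_eq_of_le_of_eq_outside (hmono : ConstraintMono d c) {S : Finset (Site d)}
    {β η η' : Cfg d} (hβ : BPfin d c Λ η = β) (hβS : ∀ x ∈ S, β x = false)
    (hle : η' ≤ η) (hout : ∀ x ∉ S, η' x = η x) : BPfin d c Λ η' = β := by
  subst hβ
  refine le_antisymm (BPfin_le_BPfin hmono fun x _ => hle x) ?_
  calc BPfin d c Λ η = BPfin d c Λ (BPfin d c Λ η) := (BPfin_BPfin η).symm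
    _ ≤ BPfin d c Λ η' := BPfin_le_BPfin hmono fun x hxΛ => by
      by_cases hxS : x ∈ S
      · simp [hβS x hxS]
      · simpa [extCfg, hxΛ, hout x hxS] using BPfin_le_extCfg (c := c) (Λ := Λ) η x

end Bootstrap

section Harris

open Finset

variable {α : Type*} [DecidableEq α] {p : ℝ}

def bernoulliWeight (p : ℝ) (u σ : Finset α) : ℝ := ∏ x ∈ u, if x ∈ σ then p else 1 - p

lemma bernoulliWeight_nonneg (hp0 : 0 ≤ p) (hp1 : p ≤ 1) (u σ : Finset α) :
    0 ≤ bernoulliWeight p u σ :=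
  prod_nonneg fun x _ => by split_ifs <;> linarith

lemma bernoulliWeight_mul_bernoulliWeight (u s t : Finset α) :
    bernoulliWeight p u s * bernoulliWeight p u t
      = bernoulliWeight p u (s ∩ t) * bernoulliWeight p u (s ∪ t) := by
  simp only [bernoulliWeight, ← prod_mul_distrib]
  refine prod_congr rfl fun x _ => ?_
  by_cases hs : x ∈ s <;> by_cases ht : x ∈ t <;> simp [hs, ht, mul_comm]

lemma bernoulliWeight_union {u v ρ τ : Finset α} (huv : Disjoint u v) (hρ : ρ ⊆ u)
    (hτ : τ ⊆ v) :
    bernoulliWeight p (u ∪ v) (ρ ∪ τ) = bernoulliWeight p u ρ * bernoulliWeight p v τ := by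
  rw [bernoulliWeight, prod_union huv]
  congr 1 <;> refine prod_congr rfl fun x hx => ?_
  · have : x ∉ τ := fun h => disjoint_left.mp huv hx (hτ h)
    simp [this]
  · have : x ∉ ρ := fun h => disjoint_left.mp huv (hρ h) hx
    simp [this]

lemma sum_bernoulliWeight (u : Finset α) : ∑ σ ∈ u.powerset, bernoulliWeight p u σ = 1 := by
  have h := prod_add (fun _ => p) (fun _ => 1 - p) u
  simp only [add_sub_cancel, prod_const_one] at h
  rw [h]
  refine sum_congr rfl fun σ hσ => ?_
  rw [bernoulliWeight, prod_ite, filter_mem_eq_inter, filter_notMem_eq_sdiff,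
    inter_eq_right.mpr (mem_powerset.mp hσ)]

lemma sum_powerset_union {M : Type*} [AddCommMonoid M] {u v : Finset α} (huv : Disjoint u v)
    (h : Finset α → M) :
    ∑ σ ∈ (u ∪ v).powerset, h σ = ∑ τ ∈ v.powerset, ∑ ρ ∈ u.powerset, h (ρ ∪ τ) := by
  rw [← sum_product']
  symm
  refine sum_nbij' (fun x => x.2 ∪ x.1) (fun σ => (σ ∩ v, σ ∩ u)) ?_ ?_ ?_ ?_ (fun _ _ => rfl)
  · rintro ⟨τ, ρ⟩ h
    simp only [mem_product, mem_powerset] at h ⊢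
    exact union_subset_union h.2 h.1
  · intro σ h
    simp only [mem_product, mem_powerset] at h ⊢
    exact ⟨inter_subset_right, inter_subset_right⟩
  · rintro ⟨τ, ρ⟩ h
    simp only [mem_product, mem_powerset] at h
    have hρv : ρ ∩ v = ∅ := disjoint_iff_inter_eq_empty.mp (huv.mono_left h.2)
    have hτu : τ ∩ u = ∅ := disjoint_iff_inter_eq_empty.mp (huv.symm.mono_left h.1)
    simp [union_inter_distrib_right, hρv, hτu, inter_eq_left.mpr h.1, inter_eq_left.mpr h.2]
  · intro σ h
    simp only [mem_powerset] at h
    rw [← inter_union_distrib_left, inter_eq_left.mpr h]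

theorem harris_powerset (hp0 : 0 ≤ p) (hp1 : p ≤ 1) (u : Finset α) {f g : Finset α → ℝ}
    (hf0 : 0 ≤ f) (hg0 : 0 ≤ g) (hf : ∀ s t, s ⊆ t → t ⊆ u → f t ≤ f s)
    (hg : ∀ s t, s ⊆ t → t ⊆ u → g t ≤ g s) :
    (∑ σ ∈ u.powerset, bernoulliWeight p u σ * f σ) *
        ∑ σ ∈ u.powerset, bernoulliWeight p u σ * g σ
      ≤ ∑ σ ∈ u.powerset, bernoulliWeight p u σ * (f σ * g σ) := by
  have hw := bernoulliWeight_nonneg hp0 hp1 u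
  have key := u.four_functions_theorem (f₁ := fun σ => bernoulliWeight p u σ * f σ)
    (f₂ := fun σ => bernoulliWeight p u σ * g σ)
    (f₃ := fun σ => bernoulliWeight p u σ * (f σ * g σ)) (f₄ := bernoulliWeight p u)
    (fun σ => mul_nonneg (hw σ) (hf0 σ)) (fun σ => mul_nonneg (hw σ) (hg0 σ))
    (fun σ => mul_nonneg (hw σ) (mul_nonneg (hf0 σ) (hg0 σ))) hw
    (fun s hs t ht => ?_) subset_rfl subset_rfl
  · simpa [sum_bernoulliWeight] using key
  -- the product weight turns the FKG lattice condition into monotonicity of `f` and `g`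
  calc bernoulliWeight p u s * f s * (bernoulliWeight p u t * g t)
      = bernoulliWeight p u (s ∩ t) * bernoulliWeight p u (s ∪ t) * (f s * g t) := by
        rw [← bernoulliWeight_mul_bernoulliWeight]; ring
    _ ≤ bernoulliWeight p u (s ∩ t) * bernoulliWeight p u (s ∪ t) * (f (s ∩ t) * g (s ∩ t)) :=
        mul_le_mul_of_nonneg_left
          (mul_le_mul (hf _ _ inter_subset_left hs) (hg _ _ inter_subset_right ht) (hg0 _)
            (hf0 _))
          (mul_nonneg (hw _) (hw _))
    _ = _ := by ring

theorem harris_powerset_union (hp0 : 0 ≤ p) (hp1 : p ≤ 1) {u v : Finset α}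
    (huv : Disjoint u v) {f g : Finset α → ℝ} (hf0 : 0 ≤ f) (hg0 : 0 ≤ g)
    (hf_indep : ∀ ρ ⊆ u, ∀ τ ⊆ v, f (ρ ∪ τ) = f ρ)
    (hf : ∀ ρ ρ', ρ ⊆ ρ' → ρ' ⊆ u → f ρ' ≤ f ρ)
    (hg : ∀ τ ⊆ v, ∀ ρ ρ', ρ ⊆ ρ' → ρ' ⊆ u → g (ρ' ∪ τ) ≤ g (ρ ∪ τ)) :
    (∑ σ ∈ (u ∪ v).powerset, bernoulliWeight p (u ∪ v) σ * f σ) *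
        ∑ σ ∈ (u ∪ v).powerset, bernoulliWeight p (u ∪ v) σ * g σ
      ≤ ∑ σ ∈ (u ∪ v).powerset, bernoulliWeight p (u ∪ v) σ * (f σ * g σ) := by
  have hsplit : ∀ h : Finset α → ℝ,
      ∑ σ ∈ (u ∪ v).powerset, bernoulliWeight p (u ∪ v) σ * h σ
        = ∑ τ ∈ v.powerset, bernoulliWeight p v τ *
            ∑ ρ ∈ u.powerset, bernoulliWeight p u ρ * h (ρ ∪ τ) := by
    intro h
    rw [sum_powerset_union huv]
    refine sum_congr rfl fun τ hτ => ?_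
    rw [mul_sum]
    refine sum_congr rfl fun ρ hρ => ?_
    rw [bernoulliWeight_union huv (mem_powerset.mp hρ) (mem_powerset.mp hτ)]
    ring
  have hf_split : ∀ τ ∈ v.powerset, ∀ h : Finset α → ℝ,
      ∑ ρ ∈ u.powerset, bernoulliWeight p u ρ * (f (ρ ∪ τ) * h ρ)
        = ∑ ρ ∈ u.powerset, bernoulliWeight p u ρ * (f ρ * h ρ) := fun τ hτ h =>
    sum_congr rfl fun ρ hρ => by rw [hf_indep ρ (mem_powerset.mp hρ) τ (mem_powerset.mp hτ)]
  have hf_sum : ∑ σ ∈ (u ∪ v).powerset, bernoulliWeight p (u ∪ v) σ * f σ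
      = ∑ ρ ∈ u.powerset, bernoulliWeight p u ρ * f ρ := by
    rw [hsplit, ← one_mul (∑ ρ ∈ u.powerset, _), ← sum_bernoulliWeight (p := p) v, sum_mul]
    refine sum_congr rfl fun τ hτ => congrArg _ ?_
    simpa using hf_split τ hτ 1
  rw [hf_sum, hsplit, hsplit, mul_sum]
  refine sum_le_sum fun τ hτ => ?_
  rw [mul_left_comm, hf_split τ hτ]
  exact mul_le_mul_of_nonneg_left
    (harris_powerset hp0 hp1 u hf0 (fun ρ => hg0 (ρ ∪ τ)) hf (hg τ (mem_powerset.mp hτ)))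
    (bernoulliWeight_nonneg hp0 hp1 v τ)

end Harris

section ProductMeasure

open Finset

variable {d : ℕ} {p : ℝ} {π : Measure (Cfg d)}

-- A configuration restricted to a finite `Λ` is encoded by its set `σ ⊆ Λ` of healthy sites.
def healthyCfg (σ : Finset (Site d)) : Cfg d := fun x => decide (x ∈ σ)

def IsDecreasingIn (S : Finset (Site d)) (E : Set (Cfg d)) : Prop :=
  ∀ ⦃η η' : Cfg d⦄, η' ≤ η → (∀ x ∉ S, η' x = η x) → η ∈ E → η' ∈ E

lemma healthyCfg_filter {Λ : Finset (Site d)} (η : Cfg d) {x : Site d} (hx : x ∈ Λ) :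
    healthyCfg {y ∈ Λ | η y = true} x = η x := by
  cases h : η x <;> simp [healthyCfg, hx, h]

lemma cyl_healthyCfg {Λ σ : Finset (Site d)} (hσ : σ ⊆ Λ) :
    cyl d Λ (healthyCfg σ) = (fun η : Cfg d => {x ∈ Λ | η x = true}) ⁻¹' {σ} := by
  ext η
  simp only [cyl, healthyCfg, Set.mem_ofPred_eq, Set.mem_preimage, Set.mem_singleton_iff,
    Finset.ext_iff, mem_filter]
  constructor
  · intro h x
    by_cases hx : x ∈ Λ
    · simp [hx, h x hx]
    · simpa [hx] using fun h' => hx (hσ h')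
  · intro h x hx
    have := h x
    cases hη : η x <;> simp_all

lemma measurableSet_cyl (Λ : Finset (Site d)) (ζ : Cfg d) : MeasurableSet (cyl d Λ ζ) := by
  have : cyl d Λ ζ = Λ.restrict (π := fun _ => Bool) ⁻¹' {Λ.restrict ζ} := by
    ext η
    simp [cyl, funext_iff]
  rw [this]
  exact Finset.measurable_restrict Λ (measurableSet_singleton _)

lemma measurableSet_of_dependsOn {Λ : Finset (Site d)} {E : Set (Cfg d)}
    (hE : DependsOn (· ∈ E) (Λ : Set (Site d))) : MeasurableSet E := by
  have : E = Λ.restrict ⁻¹' (Λ.restrict '' E) := by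
    ext η
    refine ⟨fun h => ⟨η, h, rfl⟩, fun ⟨η', h', heq⟩ => ?_⟩
    exact (hE fun x hx => congrFun heq ⟨x, hx⟩).mp h'
  rw [this]
  exact Finset.measurable_restrict Λ (Set.to_countable _).measurableSet

lemma indicator_healthyCfg_union_le {S : Finset (Site d)} {E : Set (Cfg d)}
    (hE : IsDecreasingIn S E) (τ : Finset (Site d)) {ρ ρ' : Finset (Site d)} (hρ : ρ ⊆ ρ')
    (hρ' : ρ' ⊆ S) :
    E.indicator (1 : Cfg d → ℝ) (healthyCfg (ρ' ∪ τ)) ≤ E.indicator 1 (healthyCfg (ρ ∪ τ)) := by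
  have hle : healthyCfg (ρ ∪ τ) ≤ healthyCfg (ρ' ∪ τ) := fun x => by
    rw [Bool.le_iff_imp]
    simpa [healthyCfg] using Or.imp_left (@hρ x)
  have hout : ∀ x ∉ S, healthyCfg (ρ ∪ τ) x = healthyCfg (ρ' ∪ τ) x := fun x hx => by
    have h1 : x ∉ ρ := fun h => hx (hρ' (hρ h))
    have h2 : x ∉ ρ' := fun h => hx (hρ' h)
    simp [healthyCfg, h1, h2]
  by_cases h : healthyCfg (ρ' ∪ τ) ∈ E
  · simp [Set.indicator_of_mem h, Set.indicator_of_mem (hE hle hout h)]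
  · simp [Set.indicator_of_notMem h, Set.indicator_nonneg]

namespace IsProd

lemma measure_cyl (hπ : IsProd d (fun _ => p) π) (hp0 : 0 ≤ p) (hp1 : p ≤ 1)
    (Λ σ : Finset (Site d)) :
    π (cyl d Λ (healthyCfg σ)) = ENNReal.ofReal (bernoulliWeight p Λ σ) := by
  rw [hπ.2, bernoulliWeight, ENNReal.ofReal_prod_of_nonneg fun x _ => by split_ifs <;> linarith]
  refine prod_congr rfl fun x _ => ?_
  by_cases hx : x ∈ σ <;> simp [healthyCfg, hx]

lemma measure_cyl_pos (hπ : IsProd d (fun _ => p) π) (hp0 : 0 < p) (hp1 : p < 1)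
    (Λ : Finset (Site d)) (ζ : Cfg d) : 0 < π (cyl d Λ ζ) := by
  rw [hπ.2, pos_iff_ne_zero, prod_ne_zero_iff]
  exact fun x _ => (ENNReal.ofReal_pos.mpr (by split_ifs <;> linarith)).ne'

lemma measure_eq_sum (hπ : IsProd d (fun _ => p) π) (hp0 : 0 ≤ p) (hp1 : p ≤ 1)
    {Λ : Finset (Site d)} {E : Set (Cfg d)} (hE : DependsOn (· ∈ E) (Λ : Set (Site d))) :
    π E = ENNReal.ofReal
      (∑ σ ∈ Λ.powerset, bernoulliWeight p Λ σ * E.indicator 1 (healthyCfg σ)) := by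
  set healthy := fun η : Cfg d => {x ∈ Λ | η x = true}
  have hE_eq : E = healthy ⁻¹' ↑{σ ∈ Λ.powerset | healthyCfg σ ∈ E} := by
    ext η
    simp only [healthy, Set.mem_preimage, coe_filter, mem_powerset, Set.mem_ofPred_eq,
      filter_subset, true_and]
    exact (hE fun x hx => (healthyCfg_filter η hx).symm).to_iff
  nth_rw 1 [hE_eq]
  rw [← sum_measure_preimage_singleton _ fun σ hσ =>
      cyl_healthyCfg (mem_powerset.mp (mem_filter.mp hσ).1) ▸ measurableSet_cyl Λ _,
    ENNReal.ofReal_sum_of_nonneg fun σ _ => mul_nonneg (bernoulliWeight_nonneg hp0 hp1 Λ σ)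
      (Set.indicator_nonneg (f := 1) (fun _ _ => zero_le_one) _),
    sum_filter]
  refine sum_congr rfl fun σ hσ => ?_
  by_cases h : healthyCfg σ ∈ E
  · rw [if_pos h, ← cyl_healthyCfg (mem_powerset.mp hσ), measure_cyl hπ hp0 hp1,
      Set.indicator_of_mem h, Pi.one_apply, mul_one]
  · rw [if_neg h, Set.indicator_of_notMem h, mul_zero, ENNReal.ofReal_zero]

theorem measure_mul_measure_le_measure_inter (hπ : IsProd d (fun _ => p) π) (hp0 : 0 ≤ p)
    (hp1 : p ≤ 1) {S T : Finset (Site d)} (hST : S ⊆ T) {A B : Set (Cfg d)}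
    (hA : DependsOn (· ∈ A) (S : Set (Site d))) (hB : DependsOn (· ∈ B) (T : Set (Site d)))
    (hA_dec : IsDecreasingIn S A) (hB_dec : IsDecreasingIn S B) :
    π A * π B ≤ π (A ∩ B) := by
  have hAT : DependsOn (· ∈ A) (T : Set (Site d)) := hA.mono (coe_subset.mpr hST)
  have hABT : DependsOn (· ∈ A ∩ B) (T : Set (Site d)) := fun η η' h => by
    simp only [Set.mem_inter_iff, hAT h, hB h]
  have hind0 : ∀ E : Set (Cfg d), 0 ≤ fun σ => E.indicator (1 : Cfg d → ℝ) (healthyCfg σ) :=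
    fun E σ => Set.indicator_nonneg (fun _ _ => zero_le_one) _
  rw [measure_eq_sum hπ hp0 hp1 hAT, measure_eq_sum hπ hp0 hp1 hB,
    measure_eq_sum hπ hp0 hp1 hABT, ← ENNReal.ofReal_mul (sum_nonneg fun σ _ =>
      mul_nonneg (bernoulliWeight_nonneg hp0 hp1 T σ) (hind0 A σ)),
    ← union_sdiff_of_subset hST]
  refine ENNReal.ofReal_le_ofReal ?_
  simp only [Set.inter_indicator_one, Pi.mul_apply]
  refine harris_powerset_union hp0 hp1 disjoint_sdiff (hind0 A) (hind0 B) ?_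
    (fun ρ ρ' hρ hρ' => by simpa using indicator_healthyCfg_union_le hA_dec ∅ hρ hρ')
    (fun τ _ ρ ρ' hρ hρ' => indicator_healthyCfg_union_le hB_dec τ hρ hρ')
  intro ρ hρ τ hτ
  have hagree : ∀ x ∈ (S : Set (Site d)), healthyCfg (ρ ∪ τ) x = healthyCfg ρ x := fun x hx => by
    have : x ∉ τ := fun h => (mem_sdiff.mp (hτ h)).2 hx
    simp [healthyCfg, this]
  simp only [Set.indicator_apply, hA hagree, Pi.one_apply]

end IsProd

end ProductMeasure

lemma box_mono {d N L : ℕ} (h : N ≤ L) : box d N ⊆ box d L := by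
  intro x hx
  rw [box, Fintype.mem_piFinset] at hx ⊢
  simp only [Finset.mem_Icc] at hx ⊢
  exact fun i => ⟨le_trans (by omega) (hx i).1, (hx i).2.trans (by omega)⟩

theorem stmt10_general (d : ℕ) (q p : ℝ) (hq0 : 0 < q) (hq1 : q < 1) (hp : p = 1 - q)
    (c : Site d → Cfg d → ℝ) (hmono : ConstraintMono d c)
    (π : Measure (Cfg d)) (hπ : IsProd d (fun _ => p) π)
    (N L : ℕ) (hNL : N < L)
    (β : Cfg d) (hβim : ∃ ζ : Cfg d, BPfin d c (box d L) ζ = β)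
    (hβ0 : ∀ x ∈ box d N, β x = false) :
    π {η | ∀ x ∈ box d N, BPfin d c (box d N) η x = false}
      ≤ (ProbabilityTheory.cond π {η | BPfin d c (box d L) η = β})
          {η | ∀ x ∈ box d N, BPfin d c (box d N) η x = false} := by
  have hp0 : 0 < p := by linarith
  have hp1 : p < 1 := by linarith
  have : IsProbabilityMeasure π := hπ.1
  set A := {η | ∀ x ∈ box d N, BPfin d c (box d N) η x = false}
  set B := {η | BPfin d c (box d L) η = β}
  have hA : DependsOn (· ∈ A) (box d N : Set (Site d)) := fun η η' h => by
    simp only [A, Set.mem_ofPred_eq, BPfin_dependsOn h]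
  have hB : DependsOn (· ∈ B) (box d L : Set (Site d)) := fun η η' h => by
    simp only [B, Set.mem_ofPred_eq, BPfin_dependsOn h]
  have hA_dec : IsDecreasingIn (box d N) A := fun η η' hle _ hη x hx =>
    le_antisymm ((BPfin_le_BPfin hmono fun y _ => hle y) x |>.trans (hη x hx).le) (Bool.false_le _)
  have hB_dec : IsDecreasingIn (box d N) B := fun η η' hle hout hη =>
    BPfin_eq_of_le_of_eq_outside hmono hη hβ0 hle hout
  obtain ⟨ζ, hζ⟩ := hβim
  have hB_pos : π B ≠ 0 := ((hπ.measure_cyl_pos hp0 hp1 (box d L) ζ).trans_le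
    (measure_mono fun η hη => (hB fun x hx => (hη x hx).symm).mp hζ)).ne'
  rw [← ENNReal.mul_le_mul_iff_left hB_pos (measure_ne_top π B),
    ProbabilityTheory.cond_mul_eq_inter (measurableSet_of_dependsOn hB), Set.inter_comm]
  exact hπ.measure_mul_measure_le_measure_inter hp0.le hp1.le (box_mono hNL.le) hA hB hA_dec hB_dec

/-- let `(c_x)` be a monotone KCM constraint family of range `r` on `ℤ^d`,
`L > N`, and `β` a configuration in the image of `BP^{Λ_L}` which is identically `0`
(infected) on `Λ_N`. Then conditioning the Bernoulli(`p`) product measure `π` on the event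
`{BP^{Λ_L}(η|_{Λ_L}) = β}` can only increase the probability that `Λ_N` is internally
emptiable: `π(BP^{Λ_N}(η|_{Λ_N}) = 0_{Λ_N} | BP^{Λ_L}(η|_{Λ_L}) = β)
≥ π(BP^{Λ_N}(η|_{Λ_N}) = 0_{Λ_N})`. -/
theorem stmt10 (d : ℕ) (q p : ℝ) (hq0 : 0 < q) (hq1 : q < 1) (hp : p = 1 - q)
    (r : ℕ) (c : Site d → Cfg d → ℝ) (hrange : HasRange d c r)
    (hc0 : ∀ x η, 0 ≤ c x η) (hmono : ConstraintMono d c)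
    (π : Measure (Cfg d)) (hπ : IsProd d (fun _ => p) π)
    (N L : ℕ) (hNL : N < L)
    (β : Cfg d) (hβim : ∃ ζ : Cfg d, BPfin d c (box d L) ζ = β)
    (hβ0 : ∀ x ∈ box d N, β x = false) :
    π {η | ∀ x ∈ box d N, BPfin d c (box d N) η x = false}
      ≤ (ProbabilityTheory.cond π {η | BPfin d c (box d L) η = β})
          {η | ∀ x ∈ box d N, BPfin d c (box d N) η x = false} :=
  stmt10_general d q p hq0 hq1 hp c hmono π hπ N L hNL β hβim hβ0
end
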